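/- Let K be a field. Let V be a 4-dimensional K-vector space with basis v₁, v₂, a₁, a₂ and operators P, Q given by P(v₁)=a₁, P(v₂)=a₂, P(a₁)=P(a₂)=0, Q=0. Let W be a 4-dimensional K-vector space with basis w₁, w₂, b₁, b₂ and operators S, T given by S(w₁)=b₁, T(w₁)=b₂ and zero on the other basis vectors. Then the associated Lie algebras L_V = K⟨P,Q⟩ ⋉ V and L_W = K⟨S,T⟩ ⋉ W are isomorphic as Lie algebras, via the linear map sending P ↦ −w₁, Q ↦ −w₂, v₁ ↦ S, v₂ ↦ T, a₁ ↦ b₁, a₂ ↦ b₂. -/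

import Mathlib

/-!
The only nonzero brackets of basis vectors are `[P, vᵢ] = aᵢ` in `L_V` and `[S, w₁] = b₁`,
`[T, w₁] = b₂` in `L_W`. The map exchanges the acting plane `⟨P, Q⟩` with `⟨v₁, v₂⟩`; the signs
`P ↦ -w₁`, `Q ↦ -w₂` compensate for the order reversal, as `[-w₁, S] = S w₁ = b₁`.
-/

/-- The bracket of the semidirect product `L_V = K⟨P,Q⟩ ⋉ V` on `(K × K) × V`. -/
def lieBk {K V : Type*} [Field K] [AddCommGroup V] [Module K V]
    (P Q : V →ₗ[K] V) (a b : (K × K) × V) : (K × K) × V :=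
  (0, (a.1.1 • P + a.1.2 • Q) b.2 - (b.1.1 • P + b.1.2 • Q) a.2)

namespace Module.Basis

variable {R M N : Type*} [CommSemiring R] [AddCommMonoid M] [Module R M] [AddCommMonoid N]
  [Module R N]

theorem apply_eq_sum_fin_four (b : Basis (Fin 4) R M) (f : M →ₗ[R] N) (x : M) :
    f x = b.repr x 0 • f (b 0) + b.repr x 1 • f (b 1) + b.repr x 2 • f (b 2)
      + b.repr x 3 • f (b 3) := by
  conv_lhs => rw [← b.sum_repr x, map_sum, Fin.sum_univ_four]
  simp only [map_smul]

end Module.Basis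

section

variable {K V W : Type*} [Field K] [AddCommGroup V] [Module K V] [AddCommGroup W] [Module K W]
  (b : Module.Basis (Fin 4) K V) (c : Module.Basis (Fin 4) K W)

noncomputable def toLW : ((K × K) × V) →ₗ[K] ((K × K) × W) where
  toFun p := ((b.repr p.2 0, b.repr p.2 1),
    -p.1.1 • c 0 - p.1.2 • c 1 + b.repr p.2 2 • c 2 + b.repr p.2 3 • c 3)
  map_add' x y := by
    ext <;> simp
    module
  map_smul' t x := by
    ext <;> simp
    module

noncomputable def ofLW : ((K × K) × W) →ₗ[K] ((K × K) × V) where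
  toFun p := ((-c.repr p.2 0, -c.repr p.2 1),
    p.1.1 • b 0 + p.1.2 • b 1 + c.repr p.2 2 • b 2 + c.repr p.2 3 • b 3)
  map_add' x y := by
    ext <;> simp
    · ring
    · ring
    · module
  map_smul' t x := by
    ext <;> simp
    module

theorem ofLW_toLW (p : (K × K) × V) : ofLW b c (toLW b c p) = p := by
  ext
  · simp [toLW, ofLW]
  · simp [toLW, ofLW]
  · simpa [toLW, ofLW] using (b.apply_eq_sum_fin_four LinearMap.id p.2).symm

theorem toLW_ofLW (p : (K × K) × W) : toLW b c (ofLW b c p) = p := by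
  ext
  · simp [toLW, ofLW]
  · simp [toLW, ofLW]
  · simpa [toLW, ofLW] using (c.apply_eq_sum_fin_four LinearMap.id p.2).symm

noncomputable def equivLW : ((K × K) × V) ≃ₗ[K] ((K × K) × W) :=
  .ofLinearMap (toLW b c) (ofLW b c) (LinearMap.ext (toLW_ofLW b c))
    (LinearMap.ext (ofLW_toLW b c))

theorem toLW_lieBk {P Q : V →ₗ[K] V} {S T : W →ₗ[K] W}
    (hP : ∀ v, P v = b.repr v 0 • b 2 + b.repr v 1 • b 3) (hQ : Q = 0)
    (hS : ∀ w, S w = c.repr w 0 • c 2) (hT : ∀ w, T w = c.repr w 0 • c 3)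
    (x y : (K × K) × V) :
    toLW b c (lieBk P Q x y) = lieBk S T (toLW b c x) (toLW b c y) := by
  ext
  · simp [toLW, lieBk, hP, hQ]
  · simp [toLW, lieBk, hP, hQ]
  · simp [toLW, lieBk, hP, hQ, hS, hT]
    module

end

theorem stmt_9 {K V W : Type*} [Field K] [AddCommGroup V] [Module K V]
    [AddCommGroup W] [Module K W]
    (b : Module.Basis (Fin 4) K V) (c : Module.Basis (Fin 4) K W)
    (P Q : V →ₗ[K] V) (S T : W →ₗ[K] W)
    (hP0 : P (b 0) = b 2) (hP1 : P (b 1) = b 3) (hP2 : P (b 2) = 0) (hP3 : P (b 3) = 0)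
    (hQ : Q = 0)
    (hS0 : S (c 0) = c 2) (hS1 : S (c 1) = 0) (hS2 : S (c 2) = 0) (hS3 : S (c 3) = 0)
    (hT0 : T (c 0) = c 3) (hT1 : T (c 1) = 0) (hT2 : T (c 2) = 0) (hT3 : T (c 3) = 0) :
    ∃ ψ : ((K × K) × V) ≃ₗ[K] ((K × K) × W),
      (∀ a b', ψ (lieBk P Q a b') = lieBk S T (ψ a) (ψ b')) ∧
      ψ (((1 : K), (0 : K)), (0 : V)) = (0, -c 0) ∧
      ψ (((0 : K), (1 : K)), (0 : V)) = (0, -c 1) ∧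
      ψ (0, b 0) = (((1 : K), (0 : K)), (0 : W)) ∧
      ψ (0, b 1) = (((0 : K), (1 : K)), (0 : W)) ∧
      ψ (0, b 2) = (0, c 2) ∧
      ψ (0, b 3) = (0, c 3) := by
  have hP v : P v = b.repr v 0 • b 2 + b.repr v 1 • b 3 := by
    simp [b.apply_eq_sum_fin_four P v, hP0, hP1, hP2, hP3]
  have hS w : S w = c.repr w 0 • c 2 := by
    simp [c.apply_eq_sum_fin_four S w, hS0, hS1, hS2, hS3]
  have hT w : T w = c.repr w 0 • c 3 := by
    simp [c.apply_eq_sum_fin_four T w, hT0, hT1, hT2, hT3]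
  refine ⟨equivLW b c, toLW_lieBk b c hP hQ hS hT, ?_⟩
  simp [equivLW, toLW]
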